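/- The partially entangled two-qubit state |ψ_θ⟩ = cos θ |00⟩ + sin θ |11⟩ with measurements A₀ = σ_z, A₁ = σ_x on the first qubit and B₀ = cos μ σ_z + sin μ σ_x, B₁ = cos μ σ_z − sin μ σ_x on the second qubit, where μ = arctan(sin 2θ), achieves the value α⟨A₀⟩ + ⟨A₀B₀⟩ + ⟨A₀B₁⟩ + ⟨A₁B₀⟩ − ⟨A₁B₁⟩ = √(8 + 2α²) of the tilted CHSH expression, where α = 2 cos 2θ / √(1 + sin² 2θ). -/

import Mathlib

open Matrix Kronecker

/-!
The state has real Schmidt coefficients, so ⟨ψ_θ|A ⊗ B|ψ_θ⟩ only sees the entries of A and B on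
the diagonal and on the anti-diagonal: ⟨A₀⟩ = cos 2θ, ⟨σ_z ⊗ σ_z⟩ = 1, ⟨σ_x ⊗ σ_x⟩ = sin 2θ and the
mixed correlators vanish. Hence the tilted CHSH value is α cos 2θ + 2 cos μ + 2 sin 2θ sin μ.
With r = √(1 + sin² 2θ) we have cos μ = 1/r and sin μ = sin 2θ / r, so this equals
(2 cos² 2θ + 2 r²) / r = 4 / r, while 8 + 2α² = 8 (r² + cos² 2θ) / r² = 16 / r².
-/

def schmidtVector (c s : ℝ) : Fin 2 × Fin 2 → ℂ :=
  fun p => if p = (0, 0) then (c : ℂ) else if p = (1, 1) then (s : ℂ) else 0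

theorem star_schmidtVector_dotProduct_kronecker_mulVec (c s : ℝ)
    (A B : Matrix (Fin 2) (Fin 2) ℂ) :
    star (schmidtVector c s) ⬝ᵥ (A ⊗ₖ B) *ᵥ schmidtVector c s =
      c ^ 2 * A 0 0 * B 0 0 + c * s * (A 0 1 * B 0 1 + A 1 0 * B 1 0) + s ^ 2 * A 1 1 * B 1 1 := by
  simp only [schmidtVector, dotProduct, Pi.star_apply, RCLike.star_def, mulVec, kroneckerMap_apply,
    mul_ite, mul_zero, Fintype.sum_prod_type, Prod.mk.injEq, Fin.sum_univ_two, and_true,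
    zero_ne_one, and_false, ↓reduceIte, one_ne_zero, add_zero, zero_add, Complex.conj_ofReal,
    map_zero, zero_mul]
  ring

theorem two_mul_cos_arctan_add_two_mul_mul_sin_arctan (s : ℝ) :
    2 * Real.cos (Real.arctan s) + 2 * s * Real.sin (Real.arctan s) = 2 * √(1 + s ^ 2) := by
  have hr : 0 < √(1 + s ^ 2) := by positivity
  rw [Real.cos_arctan, Real.sin_arctan]
  field_simp
  rw [Real.sq_sqrt (by positivity)]

theorem sqrt_eight_add_two_mul_sq_eq {s c : ℝ} (h : s ^ 2 + c ^ 2 = 1) :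
    √(8 + 2 * (2 * c / √(1 + s ^ 2)) ^ 2) = 4 / √(1 + s ^ 2) := by
  have hr : 0 < √(1 + s ^ 2) := by positivity
  rw [Real.sqrt_eq_iff_eq_sq (by positivity) (by positivity), div_pow, div_pow,
    Real.sq_sqrt (by positivity)]
  field_simp
  linear_combination 8 * h

theorem tiltedCHSH_value_eq {s c : ℝ} (h : s ^ 2 + c ^ 2 = 1) :
    2 * c / √(1 + s ^ 2) * c + 2 * Real.cos (Real.arctan s) + 2 * s * Real.sin (Real.arctan s)
      = √(8 + 2 * (2 * c / √(1 + s ^ 2)) ^ 2) := by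
  have hr : 0 < √(1 + s ^ 2) := by positivity
  rw [add_assoc, two_mul_cos_arctan_add_two_mul_mul_sin_arctan, sqrt_eight_add_two_mul_sq_eq h]
  field_simp
  rw [Real.sq_sqrt (by positivity)]
  linear_combination 2 * h

theorem stmt4 (θ : ℝ) :
    let σz : Matrix (Fin 2) (Fin 2) ℂ := !![1, 0; 0, -1]
    let σx : Matrix (Fin 2) (Fin 2) ℂ := !![0, 1; 1, 0]
    let α : ℝ := 2 * Real.cos (2 * θ) / Real.sqrt (1 + Real.sin (2 * θ) ^ 2)
    let μ : ℝ := Real.arctan (Real.sin (2 * θ))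
    let ψ : Fin 2 × Fin 2 → ℂ := fun p =>
      if p = (0, 0) then (Real.cos θ : ℂ) else if p = (1, 1) then (Real.sin θ : ℂ) else 0
    let E : Matrix (Fin 2 × Fin 2) (Fin 2 × Fin 2) ℂ → ℂ := fun M => star ψ ⬝ᵥ M.mulVec ψ
    let A0 := σz
    let A1 := σx
    let B0 := (Real.cos μ : ℂ) • σz + (Real.sin μ : ℂ) • σx
    let B1 := (Real.cos μ : ℂ) • σz - (Real.sin μ : ℂ) • σx
    (α : ℂ) * E (A0 ⊗ₖ (1 : Matrix (Fin 2) (Fin 2) ℂ)) + E (A0 ⊗ₖ B0) + E (A0 ⊗ₖ B1)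
        + E (A1 ⊗ₖ B0) - E (A1 ⊗ₖ B1)
      = (Real.sqrt (8 + 2 * α ^ 2) : ℂ) := by
  intro σz σx α μ ψ E A0 A1 B0 B1
  have hψ : ψ = schmidtVector (Real.cos θ) (Real.sin θ) := rfl
  have hθ : (Real.sin θ : ℂ) ^ 2 + (Real.cos θ : ℂ) ^ 2 = 1 := by
    exact_mod_cast Real.sin_sq_add_cos_sq θ
  have hvalue : (α : ℂ) * E (A0 ⊗ₖ (1 : Matrix (Fin 2) (Fin 2) ℂ)) + E (A0 ⊗ₖ B0) + E (A0 ⊗ₖ B1)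
      + E (A1 ⊗ₖ B0) - E (A1 ⊗ₖ B1)
      = ((α * Real.cos (2 * θ) + 2 * Real.cos μ + 2 * Real.sin (2 * θ) * Real.sin μ : ℝ) : ℂ) := by
    simp only [E, hψ, star_schmidtVector_dotProduct_kronecker_mulVec]
    simp only [A0, A1, B0, B1, σz, σx, Fin.isValue, of_apply, cons_val', cons_val_zero,
      cons_val_fin_one, mul_one, one_apply_eq, cons_val_one, ne_eq, zero_ne_one,
      not_false_eq_true, one_apply_ne, mul_zero, one_ne_zero, add_zero, mul_neg, smul_of,
      smul_cons, smul_eq_mul, smul_empty, of_add_of, add_cons, head_cons, tail_cons, zero_add,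
      empty_add_empty, zero_mul, neg_mul, neg_neg, of_sub_of, sub_cons, sub_zero, zero_sub,
      sub_self, zero_empty, neg_zero, one_mul, Real.cos_two_mul', Real.sin_two_mul,
      Complex.ofReal_add, Complex.ofReal_mul, Complex.ofReal_sub, Complex.ofReal_pow,
      Complex.ofReal_ofNat]
    linear_combination 2 * (Real.cos μ : ℂ) * hθ
  rw [hvalue, tiltedCHSH_value_eq (Real.sin_sq_add_cos_sq (2 * θ))]
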